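/- Let n ≥ 3 and let X be a C³ conformal Killing field on EuclideanSpace ℝ n. Then the function V = δ^e X = −div X lies in the kernel of the adjoint of the linearized scalar curvature operator at the Euclidean metric, i.e. for every x, v, w one has Hess V x (v, w) + (ΔV x)·⟪v, w⟫ = 0, where ΔV x = −(trace of Hess V x). (This is the key fact, combining Lemma 2.2 at λ = 0 with the description of (DScal)_e*, that allows Michel's approach to be applied with V = δ^e X in the proof that the classical mass m(g) equals the Ricci version m_R(g) and that the classical center of mass equals its Ricci version.) -/

import Mathlib

open scoped RealInnerProductSpace

/-- The `i`-th standard basis vector of `EuclideanSpace ℝ (Fin n)`. -/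
noncomputable def stdBasis (n : ℕ) (i : Fin n) : EuclideanSpace ℝ (Fin n) :=
  EuclideanSpace.single i (1 : ℝ)

/-- The Euclidean divergence of a vector field: the trace of its derivative. -/
noncomputable def divE (n : ℕ) (X : EuclideanSpace ℝ (Fin n) → EuclideanSpace ℝ (Fin n))
    (x : EuclideanSpace ℝ (Fin n)) : ℝ :=
  ∑ i : Fin n, ⟪fderiv ℝ X x (stdBasis n i), stdBasis n i⟫

/-- The Euclidean Hessian of a function, `Hess V x (v, w) = fderiv (fderiv V) x v w`. -/
noncomputable def hessE (n : ℕ) (V : EuclideanSpace ℝ (Fin n) → ℝ)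
    (x v w : EuclideanSpace ℝ (Fin n)) : ℝ :=
  fderiv ℝ (fderiv ℝ V) x v w

/-- The geometer's Laplacian, `ΔV = −(trace of Hess V)`. -/
noncomputable def laplE (n : ℕ) (V : EuclideanSpace ℝ (Fin n) → ℝ)
    (x : EuclideanSpace ℝ (Fin n)) : ℝ :=
  -∑ i : Fin n, hessE n V x (stdBasis n i) (stdBasis n i)

/-!
Differentiating the conformal Killing equation `⟪DX v, w⟫ + ⟪DX w, v⟫ = (2/n) (div X) ⟪v, w⟫`
and recovering `D²X` from its symmetrisations (Koszul's trick) expresses `D²X` through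
`d(div X)`. Differentiating once more, the symmetry of `D³X` in its first two slots says that the
Kulkarni–Nomizu product `h ⊙ g` of `h = Hess (div X)` with the metric vanishes. One contraction
gives `(n - 2) h + (tr h) g = 0`, a second one `(2n - 2) tr h = 0`, so `h = 0` for `n ≥ 3`.
Hence `V = -div X` has `Hess V = 0` and `ΔV = 0`.
-/

open Module

def kulkarniNomizu {α R : Type*} [CommRing R] (h k : α → α → R) (t u v w : α) : R :=
  h t v * k u w + h u w * k t v - h t w * k u v - h u v * k t w

section InnerProductSpace

variable {E : Type*} [NormedAddCommGroup E] [InnerProductSpace ℝ E]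

theorem two_mul_inner_eq_of_inner_add_inner_eq {S : E → E → E} {ℓ : E → ℝ}
    (hS : ∀ u v, S u v = S v u) (h : ∀ u v w, ⟪S u v, w⟫ + ⟪S u w, v⟫ = ℓ u * ⟪v, w⟫)
    (u v w : E) : 2 * ⟪S u v, w⟫ = ℓ u * ⟪v, w⟫ + ℓ v * ⟪u, w⟫ - ℓ w * ⟪u, v⟫ := by
  have h₁ := h u v w
  have h₂ := h v w u
  have h₃ := h w u v
  rw [hS v u, real_inner_comm u w] at h₂
  rw [hS w u, hS w v] at h₃
  linear_combination h₁ + h₂ - h₃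

theorem kulkarniNomizu_inner_eq_zero_of_inner_add_inner_eq {T : E → E → E → E} {H : E → E → ℝ}
    {c : ℝ} (hc : c ≠ 0) (hT₁ : ∀ t u, T t u = T u t) (hT₂ : ∀ t u v, T t u v = T t v u)
    (hH : ∀ t u, H t u = H u t)
    (h : ∀ t u v w, ⟪T t u v, w⟫ + ⟪T t u w, v⟫ = c * H t u * ⟪v, w⟫) (t u v w : E) :
    kulkarniNomizu H (fun a b => ⟪a, b⟫) t u v w = 0 := by
  have koszul (t : E) := two_mul_inner_eq_of_inner_add_inner_eq (ℓ := fun u => c * H t u)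
    (hT₂ t) (fun u v w => (h t u v w).trans (by ring))
  have h₁ := koszul t u v w
  have h₂ := koszul u t v w
  rw [hT₁ u t, hH u t] at h₂
  refine (mul_eq_zero.mp ?_).resolve_left hc
  unfold kulkarniNomizu
  linear_combination h₂ - h₁

theorem sum_kulkarniNomizu_inner {ι : Type*} [Fintype ι] (b : OrthonormalBasis ι ℝ E)
    (H : E →L[ℝ] E →L[ℝ] ℝ) (t v : E) :
    ∑ i, kulkarniNomizu (fun a b => H a b) (fun a b => ⟪a, b⟫) t (b i) v (b i) =
      (Fintype.card ι - 2) * H t v + (∑ i, H (b i) (b i)) * ⟪t, v⟫ := by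
  have hv : ∑ i, H t (b i) * ⟪b i, v⟫ = H t v := by
    simpa [mul_comm] using congrArg (H t) (b.sum_repr' v)
  have ht : ∑ i, H (b i) v * ⟪t, b i⟫ = H t v := by
    simpa [mul_comm, real_inner_comm] using congrArg (fun a => H a v) (b.sum_repr' t)
  simp only [kulkarniNomizu, Finset.sum_sub_distrib, Finset.sum_add_distrib, ← Finset.sum_mul,
    hv, ht, real_inner_self_eq_norm_sq, b.orthonormal.1, one_pow, Finset.sum_const,
    Finset.card_univ, nsmul_eq_mul, mul_one]
  ring

theorem eq_zero_of_kulkarniNomizu_inner_eq_zero [FiniteDimensional ℝ E] (hE : 3 ≤ finrank ℝ E)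
    {H : E →L[ℝ] E →L[ℝ] ℝ}
    (h : ∀ t u v w, kulkarniNomizu (fun a b => H a b) (fun a b => ⟪a, b⟫) t u v w = 0) :
    H = 0 := by
  have hn : (3 : ℝ) ≤ finrank ℝ E := by exact_mod_cast hE
  let b := stdOrthonormalBasis ℝ E
  have hcontract (t v : E) :
      (finrank ℝ E - 2 : ℝ) * H t v + (∑ i, H (b i) (b i)) * ⟪t, v⟫ = 0 := by
    simpa [h] using (sum_kulkarniNomizu_inner b H t v).symm
  have htrace : ∑ i, H (b i) (b i) = 0 := by
    have hsum := Finset.sum_eq_zero (s := Finset.univ) fun i _ => hcontract (b i) (b i)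
    simp only [Finset.sum_add_distrib, ← Finset.mul_sum, real_inner_self_eq_norm_sq,
      b.orthonormal.1, one_pow, Finset.sum_const, Finset.card_univ, Fintype.card_fin,
      nsmul_eq_mul, mul_one] at hsum
    have : (2 * finrank ℝ E - 2 : ℝ) * ∑ i, H (b i) (b i) = 0 := by
      linear_combination hsum
    exact (mul_eq_zero.mp this).resolve_left (by linarith)
  ext t v
  have := hcontract t v
  rw [htrace, zero_mul, add_zero] at this
  simpa using (mul_eq_zero.mp this).resolve_left (by linarith)

end InnerProductSpace

section Calculus

variable {𝕜 E F G : Type*} [NontriviallyNormedField 𝕜] [NormedAddCommGroup E] [NormedSpace 𝕜 E]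
  [NormedAddCommGroup F] [NormedSpace 𝕜 F] [NormedAddCommGroup G] [NormedSpace 𝕜 G]

theorem fderiv_clm_comp_apply (L : F →L[𝕜] G) {f : E → F} {x : E}
    (hf : DifferentiableAt 𝕜 f x) (t : E) :
    fderiv 𝕜 (fun y => L (f y)) x t = L (fderiv 𝕜 f x t) := by
  rw [← Function.comp_def, fderiv_comp x L.differentiableAt hf, L.fderiv]
  rfl

theorem fderiv_fderiv_clm_comp_apply (L : F →L[𝕜] G) {f : E → F} {x : E}
    (hf : ContDiffAt 𝕜 2 f x) (t u : E) :
    fderiv 𝕜 (fderiv 𝕜 fun y => L (f y)) x t u = L (fderiv 𝕜 (fderiv 𝕜 f) x t u) := by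
  simpa [iteratedFDeriv_two_apply, Function.comp_def] using
    congr($(L.iteratedFDeriv_comp_left hf le_rfl) ![t, u])

end Calculus

theorem fderiv_fderiv_fderiv_apply_comm {E F : Type*} [NormedAddCommGroup E] [NormedSpace ℝ E]
    [NormedAddCommGroup F] [NormedSpace ℝ F] {X : E → F} (hX : ContDiff ℝ 3 X) (x t u v : E) :
    fderiv ℝ (fderiv ℝ (fderiv ℝ X)) x t u v = fderiv ℝ (fderiv ℝ (fderiv ℝ X)) x t v u := by
  let L : (E →L[ℝ] E →L[ℝ] F) →L[ℝ] F :=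
    (ContinuousLinearMap.apply ℝ F v).comp (ContinuousLinearMap.apply ℝ (E →L[ℝ] F) u) -
      (ContinuousLinearMap.apply ℝ F u).comp (ContinuousLinearMap.apply ℝ (E →L[ℝ] F) v)
  have hL : (fun y => L (fderiv ℝ (fderiv ℝ X) y)) = 0 := by
    ext1 y
    simpa [L, sub_eq_zero] using (hX.contDiffAt (x := y)).isSymmSndFDerivAt (by norm_num) u v
  have hD2X : ContDiff ℝ 1 (fderiv ℝ (fderiv ℝ X)) :=
    (hX.fderiv_right (m := 2) (by norm_num)).fderiv_right (m := 1) (by norm_num)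
  have := fderiv_clm_comp_apply L (hD2X.differentiable one_ne_zero x) t
  rw [hL] at this
  simpa [L, sub_eq_zero] using this.symm

section Trace

variable (𝕜 E : Type*) [NontriviallyNormedField 𝕜] [CompleteSpace 𝕜] [NormedAddCommGroup E]
  [NormedSpace 𝕜 E] [FiniteDimensional 𝕜 E]

noncomputable def traceL : (E →L[𝕜] E) →L[𝕜] 𝕜 :=
  LinearMap.toContinuousLinearMap ((LinearMap.trace 𝕜 E).comp (ContinuousLinearMap.coeLM 𝕜))

variable {𝕜 E}

@[simp]
theorem traceL_apply (A : E →L[𝕜] E) : traceL 𝕜 E A = LinearMap.trace 𝕜 E A :=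
  rfl

theorem fderiv_fderiv_trace_fderiv_apply {X : E → E} {x : E}
    (hX : ContDiffAt 𝕜 2 (fderiv 𝕜 X) x) (t u : E) :
    fderiv 𝕜 (fderiv 𝕜 fun y => LinearMap.trace 𝕜 E (fderiv 𝕜 X y)) x t u =
      LinearMap.trace 𝕜 E (fderiv 𝕜 (fderiv 𝕜 (fderiv 𝕜 X)) x t u) :=
  fderiv_fderiv_clm_comp_apply (traceL 𝕜 E) hX t u

end Trace

section ConformalKilling

variable {E : Type*} [NormedAddCommGroup E] [InnerProductSpace ℝ E]

def IsConformalKilling (X : E → E) : Prop :=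
  ∀ x v w, ⟪fderiv ℝ X x v, w⟫ + ⟪fderiv ℝ X x w, v⟫ =
    (2 / finrank ℝ E) * LinearMap.trace ℝ E (fderiv ℝ X x) * ⟪v, w⟫

variable [FiniteDimensional ℝ E]

theorem IsConformalKilling.inner_fderiv_fderiv_fderiv_add {X : E → E}
    (hCK : IsConformalKilling X) (hX : ContDiff ℝ 3 X) (x t u v w : E) :
    ⟪fderiv ℝ (fderiv ℝ (fderiv ℝ X)) x t u v, w⟫ + ⟪fderiv ℝ (fderiv ℝ (fderiv ℝ X)) x t u w, v⟫ =
      (2 / finrank ℝ E) *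
        fderiv ℝ (fderiv ℝ fun y => LinearMap.trace ℝ E (fderiv ℝ X y)) x t u * ⟪v, w⟫ := by
  have hDX : ContDiffAt ℝ 2 (fderiv ℝ X) x := (hX.fderiv_right (by norm_num)).contDiffAt
  -- The conformal Killing equation is the linear condition `Φ ∘ DX = 0`, which survives
  -- differentiation.
  let Φ : (E →L[ℝ] E) →L[ℝ] ℝ := (innerSL ℝ w).comp (ContinuousLinearMap.apply ℝ E v) +
    (innerSL ℝ v).comp (ContinuousLinearMap.apply ℝ E w) -
    ((2 / finrank ℝ E) * ⟪v, w⟫) • traceL ℝ E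
  have hΦ_apply (A : E →L[ℝ] E) :
      Φ A = ⟪A v, w⟫ + ⟪A w, v⟫ - (2 / finrank ℝ E) * ⟪v, w⟫ * traceL ℝ E A := by
    simp [Φ, real_inner_comm (A v) w, real_inner_comm (A w) v]
  have hΦ : (fun y => Φ (fderiv ℝ X y)) = 0 := by
    funext y
    rw [Pi.zero_apply, hΦ_apply, hCK y v w, traceL_apply]
    ring
  have hΦT : Φ (fderiv ℝ (fderiv ℝ (fderiv ℝ X)) x t u) = 0 := by
    simpa [hΦ] using (fderiv_fderiv_clm_comp_apply Φ hDX t u).symm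
  rw [hΦ_apply, traceL_apply] at hΦT
  rw [fderiv_fderiv_trace_fderiv_apply hDX]
  linear_combination hΦT

theorem IsConformalKilling.fderiv_fderiv_trace_fderiv_eq_zero {X : E → E}
    (hCK : IsConformalKilling X) (hX : ContDiff ℝ 3 X) (hE : 3 ≤ finrank ℝ E) (x : E) :
    fderiv ℝ (fderiv ℝ fun y => LinearMap.trace ℝ E (fderiv ℝ X y)) x = 0 := by
  have hDX : ContDiffAt ℝ 2 (fderiv ℝ X) x := (hX.fderiv_right (by norm_num)).contDiffAt
  have hT (t u : E) : fderiv ℝ (fderiv ℝ (fderiv ℝ X)) x t u =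
      fderiv ℝ (fderiv ℝ (fderiv ℝ X)) x u t :=
    hDX.isSymmSndFDerivAt (by simp) t u
  have hc : (2 / finrank ℝ E : ℝ) ≠ 0 := by
    have : (finrank ℝ E : ℝ) ≠ 0 := by exact_mod_cast (by omega : finrank ℝ E ≠ 0)
    positivity
  refine eq_zero_of_kulkarniNomizu_inner_eq_zero hE fun t u v w => ?_
  exact kulkarniNomizu_inner_eq_zero_of_inner_add_inner_eq
    (T := fun t u v => fderiv ℝ (fderiv ℝ (fderiv ℝ X)) x t u v) hc (fun t u => by rw [hT])
    (fderiv_fderiv_fderiv_apply_comm hX x)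
    (fun t u => by simp only [fderiv_fderiv_trace_fderiv_apply hDX, hT])
    (hCK.inner_fderiv_fderiv_fderiv_add hX x) t u v w

end ConformalKilling

theorem divE_eq_trace {n : ℕ} (X : EuclideanSpace ℝ (Fin n) → EuclideanSpace ℝ (Fin n))
    (x : EuclideanSpace ℝ (Fin n)) :
    divE n X x = LinearMap.trace ℝ (EuclideanSpace ℝ (Fin n)) (fderiv ℝ X x) := by
  simp [divE, stdBasis, LinearMap.trace_eq_sum_inner _ (EuclideanSpace.basisFun (Fin n) ℝ),
    real_inner_comm]

/-- **`δ^e X` lies in the kernel of `(DScal)_e*`.** If `n ≥ 3` and `X` is a `C³` conformal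
Killing field of the Euclidean metric, then `V = δ^e X = −div X` satisfies
`Hess V + (ΔV)·e = 0`, the kernel equation of the adjoint of the linearized scalar
curvature operator at the Euclidean metric. -/
theorem div_conformal_killing_mem_kernel_adjoint
    (n : ℕ) (hn : 3 ≤ n)
    (X : EuclideanSpace ℝ (Fin n) → EuclideanSpace ℝ (Fin n))
    (hX : ContDiff ℝ 3 X)
    (hCK : ∀ (x v w : EuclideanSpace ℝ (Fin n)),
      ⟪fderiv ℝ X x v, w⟫ + ⟪fderiv ℝ X x w, v⟫ = (2 / (n : ℝ)) * divE n X x * ⟪v, w⟫) :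
    ∀ (x v w : EuclideanSpace ℝ (Fin n)),
      hessE n (fun y => -divE n X y) x v w +
        laplE n (fun y => -divE n X y) x * ⟪v, w⟫ = 0 := by
  have hdiv : divE n X = fun y => LinearMap.trace ℝ (EuclideanSpace ℝ (Fin n)) (fderiv ℝ X y) :=
    funext (divE_eq_trace X)
  have hconf : IsConformalKilling X := by
    simpa [IsConformalKilling, finrank_euclideanSpace_fin, divE_eq_trace] using hCK
  have hhess (x v w : EuclideanSpace ℝ (Fin n)) : hessE n (fun y => -divE n X y) x v w = 0 := by
    have hneg : fderiv ℝ (fun y => -divE n X y) = -fderiv ℝ (divE n X) :=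
      funext fun _ => fderiv_fun_neg
    rw [hessE, hneg, fderiv_neg, hdiv,
      hconf.fderiv_fderiv_trace_fderiv_eq_zero hX (by simpa using hn) x]
    simp
  intro x v w
  simp [laplE, hhess]
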